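/- If the set 𝓘_# = {i : R(X'X)⁻¹xᵢ·' = 0} is empty, then 𝖡 = span(X). -/
import Mathlib


open Matrix

/-- `R (XᵀX)⁻¹ Xᵀ`, the 1×n row vector whose i-th entry is `R(X'X)⁻¹xᵢ·'`. -/
noncomputable def cRow {n k : ℕ} (X : Matrix (Fin n) (Fin k) ℝ)
    (R : Matrix (Fin 1) (Fin k) ℝ) : Matrix (Fin 1) (Fin n) ℝ :=
  R * (Xᵀ * X)⁻¹ * Xᵀ

/-- OLS estimator `β̂(y) = (X'X)⁻¹X'y`. -/
noncomputable def betaHat {n k : ℕ} (X : Matrix (Fin n) (Fin k) ℝ)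
    (y : Fin n → ℝ) : Fin k → ℝ :=
  ((Xᵀ * X)⁻¹ * Xᵀ).mulVec y

/-- Residual vector `û(y) = y - Xβ̂(y)`. -/
noncomputable def uHat {n k : ℕ} (X : Matrix (Fin n) (Fin k) ℝ)
    (y : Fin n → ℝ) : Fin n → ℝ :=
  y - X.mulVec (betaHat X y)

/-- `B(y) = R(X'X)⁻¹X' diag(û₁(y),…,ûₙ(y))`, viewed as a vector in ℝⁿ. -/
noncomputable def Bmap {n k : ℕ} (X : Matrix (Fin n) (Fin k) ℝ)
    (R : Matrix (Fin 1) (Fin k) ℝ) (y : Fin n → ℝ) : Fin n → ℝ :=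
  fun i => cRow X R 0 i * uHat X y i

/-- The set `𝖡 = {y : B(y) = 0}`. -/
noncomputable def Bset {n k : ℕ} (X : Matrix (Fin n) (Fin k) ℝ)
    (R : Matrix (Fin 1) (Fin k) ℝ) : Set (Fin n → ℝ) :=
  {y | Bmap X R y = 0}

/-- `Ω̂_Het(y) = R(X'X)⁻¹X' diag(d₁û₁²(y),…,dₙûₙ²(y)) X(X'X)⁻¹R'`. -/
noncomputable def OmegaHat {n k : ℕ} (X : Matrix (Fin n) (Fin k) ℝ)
    (R : Matrix (Fin 1) (Fin k) ℝ) (d : Fin n → ℝ) (y : Fin n → ℝ) : ℝ :=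
  (R * (Xᵀ * X)⁻¹ * Xᵀ * Matrix.diagonal (fun i => d i * (uHat X y i) ^ 2) *
    X * (Xᵀ * X)⁻¹ * Rᵀ) 0 0

/-- Heteroskedasticity robust test statistic `T_Het`. -/
noncomputable def THet {n k : ℕ} (X : Matrix (Fin n) (Fin k) ℝ)
    (R : Matrix (Fin 1) (Fin k) ℝ) (d : Fin n → ℝ) (r : ℝ) (y : Fin n → ℝ) : ℝ :=
  if OmegaHat X R d y ≠ 0 then (R.mulVec (betaHat X y) 0 - r) ^ 2 / OmegaHat X R d y
  else 0

/-- `𝔐₀^lin = {Xβ : Rβ = 0}`. -/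
def M0lin {n k : ℕ} (X : Matrix (Fin n) (Fin k) ℝ)
    (R : Matrix (Fin 1) (Fin k) ℝ) : Set (Fin n → ℝ) :=
  {y | ∃ β : Fin k → ℝ, y = X.mulVec β ∧ R.mulVec β 0 = 0}

/-- `𝓥_# = span{eᵢ(n) : i ∈ 𝓘_#, eᵢ(n) ∈ 𝖡}`. -/
noncomputable def Vsharp {n k : ℕ} (X : Matrix (Fin n) (Fin k) ℝ)
    (R : Matrix (Fin 1) (Fin k) ℝ) : Submodule ℝ (Fin n → ℝ) :=
  Submodule.span ℝ ((fun i => (Pi.single i 1 : Fin n → ℝ)) ''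
    {i | cRow X R 0 i = 0 ∧ (Pi.single i 1 : Fin n → ℝ) ∈ Bset X R})

/-- `𝓛_# = span(𝔐₀^lin ∪ 𝓥_#)`. -/
noncomputable def Lsharp {n k : ℕ} (X : Matrix (Fin n) (Fin k) ℝ)
    (R : Matrix (Fin 1) (Fin k) ℝ) : Submodule ℝ (Fin n → ℝ) :=
  Submodule.span ℝ (M0lin X R ∪ (Vsharp X R : Set (Fin n → ℝ)))

lemma isUnit_XtX {n k : ℕ} (X : Matrix (Fin n) (Fin k) ℝ) (hX : X.rank = k) :
    IsUnit (Xᵀ * X) := by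
  rw [← Matrix.mulVec_injective_iff_isUnit]
  have h : (Xᵀ * X).rank = k := by rw [Matrix.rank_transpose_mul_self, hX]
  have hsurj : Function.Surjective (Xᵀ * X).mulVecLin := by
    rw [← LinearMap.range_eq_top]
    apply Submodule.eq_top_of_finrank_eq
    rw [← Matrix.rank, h]
    simp [Module.finrank_pi]
  exact (LinearMap.injective_iff_surjective).mpr hsurj

lemma uHat_mulVec {n k : ℕ} (X : Matrix (Fin n) (Fin k) ℝ) (hX : X.rank = k)
    (β : Fin k → ℝ) : uHat X (X.mulVec β) = 0 := by
  have hu := isUnit_XtX X hX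
  have hdet : IsUnit (Xᵀ * X).det := (Matrix.isUnit_iff_isUnit_det _).mp hu
  unfold uHat betaHat
  simp only [Matrix.mulVec_mulVec]
  rw [Matrix.mul_assoc ((Xᵀ * X)⁻¹), Matrix.nonsing_inv_mul _ hdet]
  simp

theorem stmt6    {n k : ℕ} (hk : 1 ≤ k) (hkn : k < n)
    (X : Matrix (Fin n) (Fin k) ℝ) (hX : X.rank = k)
    (R : Matrix (Fin 1) (Fin k) ℝ) (hR : R ≠ 0) :
    {i : Fin n | cRow X R 0 i = 0} = ∅ → Bset X R = Set.range X.mulVec := by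
  intro hempty
  ext y
  constructor
  · intro hy
    have hcr : ∀ i, cRow X R 0 i ≠ 0 := by
      intro i hi
      exact absurd (Set.eq_empty_iff_forall_notMem.mp hempty i) (by simpa using hi)
    have hu : uHat X y = 0 := by
      funext i
      have := congrFun hy i
      simp only [Bmap, Pi.zero_apply] at this
      rcases mul_eq_zero.mp this with h | h
      · exact absurd h (hcr i)
      · exact h
    have : y = X.mulVec (betaHat X y) := sub_eq_zero.mp hu
    exact ⟨betaHat X y, this.symm⟩
  · rintro ⟨β, rfl⟩
    show Bmap X R (X.mulVec β) = 0
    funext i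
    simp [Bmap, uHat_mulVec X hX β]
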